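/- For c > 0, if A(x,t) = c·tanh²(√c(x - ct)), then A satisfies A_t + ∂ₓ(A² - (√A/2)·A_x) = 0 for all x, t with x < ct. -/

import Mathlib

/-!
For a travelling wave `A(x, t) = f(x - c t)` the equation reads `(F - c f)' = 0`, where
`F = f² - (√f / 2) f'` is the flux of the profile, so it suffices that `F = c f` near `x - c t`.
For `f ξ = c tanh²(√c ξ)` and `ξ < 0` one has `√f = -√c tanh(√c ξ)` and
`f' = 2 c √c tanh(√c ξ) (1 - tanh²(√c ξ))`, which gives `F = c² tanh²(√c ξ) = c f`.
-/

open Real Filter Topology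

theorem Real.hasDerivAt_tanh (x : ℝ) : HasDerivAt tanh (1 - tanh x ^ 2) x := by
  have h := (hasDerivAt_sinh x).div (hasDerivAt_cosh x) (cosh_pos x).ne'
  rw [show sinh / cosh = tanh from funext fun y => (tanh_eq_sinh_div_cosh y).symm] at h
  refine h.congr_deriv ?_
  have hcosh := (cosh_pos x).ne'
  rw [tanh_eq_sinh_div_cosh]
  field_simp

theorem Real.tanh_nonpos {x : ℝ} (hx : x ≤ 0) : tanh x ≤ 0 := by
  rw [tanh_eq_sinh_div_cosh]
  exact div_nonpos_of_nonpos_of_nonneg (sinh_nonpos_iff.mpr hx) (cosh_pos x).le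

noncomputable def foamFlux (f : ℝ → ℝ) (ξ : ℝ) : ℝ :=
  f ξ ^ 2 - √(f ξ) / 2 * deriv f ξ

theorem foamDrainage_travelingWave {f : ℝ → ℝ} {c x t : ℝ}
    (hf : DifferentiableAt ℝ f (x - c * t))
    (hflux : foamFlux f =ᶠ[𝓝 (x - c * t)] fun ξ => c * f ξ) :
    deriv (fun s => f (x - c * s)) t
      + deriv (fun y => f (y - c * t) ^ 2
          - √(f (y - c * t)) / 2 * deriv (fun z => f (z - c * t)) y) x = 0 := by
  have htime : HasDerivAt (fun s => f (x - c * s)) (deriv f (x - c * t) * -c) t := by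
    have hphase : HasDerivAt (fun s => x - c * s) (-c) t := by
      simpa using ((hasDerivAt_id t).const_mul c).const_sub x
    exact hf.hasDerivAt.comp t hphase
  have hspace : (fun y => f (y - c * t) ^ 2
      - √(f (y - c * t)) / 2 * deriv (fun z => f (z - c * t)) y)
      = fun y => foamFlux f (y - c * t) := by
    funext y
    rw [deriv_comp_sub_const, foamFlux]
  rw [htime.deriv, hspace, deriv_comp_sub_const, hflux.deriv_eq, deriv_const_mul _ hf]
  ring

noncomputable def tanhSqWave (c ξ : ℝ) : ℝ := c * tanh (√c * ξ) ^ 2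

theorem hasDerivAt_tanhSqWave (c ξ : ℝ) :
    HasDerivAt (tanhSqWave c)
      (2 * c * √c * tanh (√c * ξ) * (1 - tanh (√c * ξ) ^ 2)) ξ := by
  have hphase : HasDerivAt (fun ξ => √c * ξ) √c ξ := by
    simpa using (hasDerivAt_id ξ).const_mul √c
  have h := (((hasDerivAt_tanh (√c * ξ)).comp ξ hphase).pow 2).const_mul c
  exact h.congr_deriv (by simp only [Function.comp_apply]; ring)

theorem foamFlux_tanhSqWave {c ξ : ℝ} (hc : 0 ≤ c) (hξ : ξ < 0) :
    foamFlux (tanhSqWave c) ξ = c * tanhSqWave c ξ := by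
  have hsc : √c * √c = c := mul_self_sqrt hc
  set T := tanh (√c * ξ)
  have hT : T ≤ 0 := tanh_nonpos (mul_nonpos_of_nonneg_of_nonpos (sqrt_nonneg c) hξ.le)
  have hsqrt : √(tanhSqWave c ξ) = -(√c * T) := by
    rw [tanhSqWave, sqrt_mul hc, sqrt_sq_eq_abs, abs_of_nonpos hT]
    ring
  rw [foamFlux, hsqrt, (hasDerivAt_tanhSqWave c ξ).deriv, tanhSqWave]
  linear_combination c * T ^ 2 * (1 - T ^ 2) * hsc

theorem foam_drainage_A_solution (c : ℝ) (hc : 0 < c) :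
    ∀ x t : ℝ, x < c * t →
      (fun A : ℝ → ℝ → ℝ =>
        deriv (fun s => A x s) t
          + deriv (fun y => (A y t) ^ 2
              - Real.sqrt (A y t) / 2 * deriv (fun z => A z t) y) x = 0)
        (fun x t => c * Real.tanh (Real.sqrt c * (x - c * t)) ^ 2) := by
  intro x t hxt
  have hflux : foamFlux (tanhSqWave c) =ᶠ[𝓝 (x - c * t)] fun ξ => c * tanhSqWave c ξ := by
    filter_upwards [Iio_mem_nhds (sub_neg.mpr hxt)] with ξ hξ
    exact foamFlux_tanhSqWave hc.le hξ
  exact foamDrainage_travelingWave (hasDerivAt_tanhSqWave c _).differentiableAt hflux
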